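/- arXiv:1706.00380 — 2 statements merged into one kernel-verified Lean document; each statement's English description precedes it below -/
import Mathlib

section
/- Let k ≥ 1 and let ∂ : ℤ^{k+1} → ℤ^k be the ℤ-linear map with ∂e_0 = f_1, ∂e_i = 2·f_i − f_{i+1} for 1 ≤ i ≤ k−1, and ∂e_k = f_k. Then every element z of the kernel of ∂ is an integer multiple of ζ_k = 2^{k−1}·e_0 − Σ_{i=1}^{k−1} 2^{k−1−i}·e_i − e_k; in particular, the kernel of ∂ is the infinite cyclic group generated by ζ_k. -/
/-!
Written in the standard bases, `∂` is upper bidiagonal with diagonal entries `±1`: its `m`-th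
coordinate is `±z_m + b_m z_{m+1}` with `b_m ∈ {1, 2}`. Back-substitution from the last
coordinate shows that a kernel element with `z_k = 0` vanishes, so the kernel has rank at
most one; `ζ_k` lies in the kernel (its entries halve from left to right, except that the
last step has `b_{k-1} = 1`) and has last coordinate `-1`, so it generates.
-/

/-- The cycle `ζ_k = 2^{k−1}·e_0 − Σ_{i=1}^{k−1} 2^{k−1−i}·e_i − e_k` in `ℤ^{k+1}`,
where `e_0, …, e_k` is the standard basis. -/
def zetaCycle (k : ℕ) : Fin (k + 1) → ℤ :=
  (2 ^ (k - 1) : ℤ) • Pi.single (⟨0, Nat.succ_pos k⟩ : Fin (k + 1)) (1 : ℤ)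
    - ∑ i ∈ (Finset.Ico 1 k).attach,
        (2 ^ (k - 1 - i.1) : ℤ) •
          Pi.single (⟨i.1, by have := (Finset.mem_Ico.mp i.2).2; omega⟩ : Fin (k + 1)) (1 : ℤ)
    - Pi.single (⟨k, by omega⟩ : Fin (k + 1)) (1 : ℤ)

section Bidiagonal

variable {R : Type*} [CommRing R] {n : ℕ}

def bidiagonal (a b : Fin n → R) : (Fin (n + 1) → R) →ₗ[R] Fin n → R :=
  LinearMap.pi fun m => a m • LinearMap.proj m.castSucc + b m • LinearMap.proj m.succ

@[simp]
theorem bidiagonal_apply (a b : Fin n → R) (z : Fin (n + 1) → R) (m : Fin n) :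
    bidiagonal a b z m = a m * z m.castSucc + b m * z m.succ := rfl

theorem eq_zero_of_bidiagonal_eq_zero {a b : Fin n → R} (ha : ∀ m, IsUnit (a m))
    {z : Fin (n + 1) → R} (hz : bidiagonal a b z = 0) (hlast : z (Fin.last n) = 0) : z = 0 := by
  suffices ∀ i, z i = 0 from funext this
  intro i
  induction i using Fin.reverseInduction with
  | last => exact hlast
  | cast m ih =>
    have h := congrFun hz m
    rw [bidiagonal_apply, ih, mul_zero, add_zero, Pi.zero_apply] at h
    exact (ha m).mul_right_eq_zero.mp h

theorem ker_bidiagonal_eq_span {a b : Fin n → R} (ha : ∀ m, IsUnit (a m))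
    {ζ : Fin (n + 1) → R} (hζ : ζ ∈ LinearMap.ker (bidiagonal a b))
    (hlast : IsUnit (ζ (Fin.last n))) :
    LinearMap.ker (bidiagonal a b) = Submodule.span R {ζ} := by
  refine le_antisymm (fun z hz => ?_) ((Submodule.span_singleton_le_iff_mem _ _).mpr hζ)
  obtain ⟨u, hu⟩ := hlast
  set c := z (Fin.last n) * ↑u⁻¹
  have hzero : z - c • ζ = 0 :=
    eq_zero_of_bidiagonal_eq_zero ha (Submodule.sub_mem _ hz (Submodule.smul_mem _ c hζ))
      (by simp [c, ← hu])
  exact Submodule.mem_span_singleton.mpr ⟨c, (sub_eq_zero.mp hzero).symm⟩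

end Bidiagonal

def boundaryMap (k : ℕ) : (Fin (k + 1) → ℤ) →ₗ[ℤ] Fin k → ℤ :=
  bidiagonal (fun m => if (m : ℕ) = 0 then 1 else -1) (fun m => if (m : ℕ) + 1 = k then 1 else 2)

theorem eq_boundaryMap (k : ℕ) (hk : 0 < k)
    (D : (Fin (k + 1) → ℤ) →ₗ[ℤ] (Fin k → ℤ))
    (hD0 : D (Pi.single (⟨0, by omega⟩ : Fin (k + 1)) 1) =
      Pi.single (⟨0, by omega⟩ : Fin k) 1)
    (hDmid : ∀ (i : ℕ) (_h1 : 1 ≤ i) (_h2 : i ≤ k - 1),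
      D (Pi.single (⟨i, by omega⟩ : Fin (k + 1)) 1) =
        (2 : ℤ) • Pi.single (⟨i - 1, by omega⟩ : Fin k) 1
          - Pi.single (⟨i, by omega⟩ : Fin k) 1)
    (hDk : D (Pi.single (⟨k, by omega⟩ : Fin (k + 1)) 1) =
      Pi.single (⟨k - 1, by omega⟩ : Fin k) 1) :
    D = boundaryMap k := by
  refine (Pi.basisFun ℤ (Fin (k + 1))).ext fun ⟨j, hj⟩ => ?_
  ext m
  have hm := m.isLt
  rw [Pi.basisFun_apply]
  have hcases : j = 0 ∨ j = k ∨ 1 ≤ j ∧ j ≤ k - 1 := by omega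
  rcases hcases with rfl | rfl | ⟨h1, h2⟩ <;> [rw [hD0]; rw [hDk]; rw [hDmid j h1 h2]]
  all_goals
    simp only [boundaryMap, bidiagonal_apply, Pi.single_apply, Fin.ext_iff, Fin.val_castSucc,
      Fin.val_succ, Nat.add_one_ne_zero, if_false, Pi.sub_apply, Pi.smul_apply, smul_eq_mul, mul_ite,
      mul_one, mul_zero]
    split_ifs <;> omega

-- At `i = k` the truncated exponent `k - 1 - k = 0` gives the entry `-1`.
theorem zetaCycle_apply (k : ℕ) (hk : 0 < k) (i : Fin (k + 1)) :
    zetaCycle k i = if (i : ℕ) = 0 then 2 ^ (k - 1) else -2 ^ (k - 1 - i) := by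
  obtain ⟨i, hi⟩ := i
  simp only [zetaCycle, Pi.sub_apply, Pi.smul_apply, Finset.sum_apply, Pi.single_apply,
    Fin.ext_iff, smul_eq_mul, mul_ite, mul_one, mul_zero]
  rw [Finset.sum_attach (Finset.Ico 1 k) fun x => if i = x then (2 : ℤ) ^ (k - 1 - x) else 0,
    Finset.sum_ite_eq]
  obtain rfl | rfl | ⟨h1, h2⟩ : i = 0 ∨ i = k ∨ 1 ≤ i ∧ i < k := by omega
  · simp [show 0 ≠ k by omega]
  · simp [show i ≠ 0 by omega]
  · simp [Finset.mem_Ico, h1, h2, show i ≠ 0 by omega, h2.ne]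

theorem boundaryMap_zetaCycle (k : ℕ) (hk : 0 < k) : boundaryMap k (zetaCycle k) = 0 := by
  ext m
  have hpow : (if (m : ℕ) + 1 = k then 1 else 2) * (2 : ℤ) ^ (k - 1 - (m + 1)) = 2 ^ (k - 1 - m) := by
    split_ifs with h
    · rw [one_mul]; congr 1; omega
    · rw [← pow_succ']; congr 1; omega
  simp only [boundaryMap, bidiagonal_apply, zetaCycle_apply k hk, Fin.val_castSucc, Fin.val_succ,
    Nat.add_one_ne_zero, if_false, Pi.zero_apply]
  by_cases h0 : (m : ℕ) = 0
  · simp only [h0, if_true, Nat.sub_zero] at hpow ⊢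
    linear_combination -hpow
  · simp only [h0, if_false]
    linear_combination -hpow

theorem zetaCycle_last (k : ℕ) (hk : 0 < k) : zetaCycle k (Fin.last k) = -1 := by
  simp [zetaCycle_apply k hk, show k ≠ 0 by omega]

/-- Let `k ≥ 1` and let `∂ : ℤ^{k+1} → ℤ^k` be the ℤ-linear map with `∂e_0 = f_1`,
`∂e_i = 2·f_i − f_{i+1}` for `1 ≤ i ≤ k−1`, and `∂e_k = f_k`.  Then every element `z` of
the kernel of `∂` is an integer multiple of
`ζ_k = 2^{k−1}·e_0 − Σ_{i=1}^{k−1} 2^{k−1−i}·e_i − e_k`; in particular, the kernel of `∂`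
is the (infinite) cyclic group generated by `ζ_k`, and `ζ_k ≠ 0`. -/
theorem ker_eq_multiples_of_zeta (k : ℕ) (hk : 1 ≤ k)
    (D : (Fin (k + 1) → ℤ) →ₗ[ℤ] (Fin k → ℤ))
    (hD0 : D (Pi.single (⟨0, by omega⟩ : Fin (k + 1)) 1) =
      Pi.single (⟨0, by omega⟩ : Fin k) 1)
    (hDmid : ∀ (i : ℕ) (_h1 : 1 ≤ i) (_h2 : i ≤ k - 1),
      D (Pi.single (⟨i, by omega⟩ : Fin (k + 1)) 1) =
        (2 : ℤ) • Pi.single (⟨i - 1, by omega⟩ : Fin k) 1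
          - Pi.single (⟨i, by omega⟩ : Fin k) 1)
    (hDk : D (Pi.single (⟨k, by omega⟩ : Fin (k + 1)) 1) =
      Pi.single (⟨k - 1, by omega⟩ : Fin k) 1) :
    (∀ z : Fin (k + 1) → ℤ, D z = 0 → ∃ c : ℤ, z = c • zetaCycle k) ∧
      LinearMap.ker D = Submodule.span ℤ {zetaCycle k} ∧ zetaCycle k ≠ 0 := by
  obtain rfl := eq_boundaryMap k hk D hD0 hDmid hDk
  have hlast := zetaCycle_last k hk
  have hker : LinearMap.ker (boundaryMap k) = Submodule.span ℤ {zetaCycle k} :=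
    ker_bidiagonal_eq_span (fun m => by split_ifs <;> simp) (boundaryMap_zetaCycle k hk)
      (by simp [hlast])
  refine ⟨fun z hz => ?_, hker, fun h => by simp [h] at hlast⟩
  obtain ⟨c, rfl⟩ := Submodule.mem_span_singleton.mp (hker ▸ LinearMap.mem_ker.mpr hz)
  exact ⟨c, rfl⟩
end

section
/- In any group G, for all elements x, y, a, b one has the decomposition [x,y] = ((xy)·[x⁻¹, y⁻¹·b]·(xy)⁻¹) · [x·b·x⁻¹, a·x⁻¹] · [a,b]. (In the paper this is applied with a, b the conical parts x̂, ŷ of x, y, so that y⁻¹·b and a·x⁻¹ are spherical; it reduces contraction of an arbitrary commutator to contractions of commutators with one spherical entry.) -/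
/-!
Each of the three factors on the right is a product of two commutators:
`(xy)[x⁻¹, y⁻¹b](xy)⁻¹ = [x,y][b,x]`, `[xbx⁻¹, ax⁻¹] = [x,b][b,a]`, and `[a,b]`.
Since `[b,x] = [x,b]⁻¹` and `[b,a] = [a,b]⁻¹`, the product telescopes to `[x,y]`.
-/

open scoped commutatorElement

section

variable {G : Type*} [Group G]

theorem conj_mul_commutatorElement_inv_left (x y b : G) :
    x * y * ⁅x⁻¹, y⁻¹ * b⁆ * (x * y)⁻¹ = ⁅x, y⁆ * ⁅b, x⁆ := by
  group

theorem commutatorElement_conj_mul_inv_right (x a b : G) :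
    ⁅x * b * x⁻¹, a * x⁻¹⁆ = ⁅x, b⁆ * ⁅b, a⁆ := by
  group

end

/-- Berger's commutator decomposition: in any group `G`, for all `x, y, a, b` one has
`[x,y] = ((xy)·[x⁻¹, y⁻¹·b]·(xy)⁻¹) · [x·b·x⁻¹, a·x⁻¹] · [a,b]`. -/
theorem commutator_decomposition {G : Type*} [Group G] (x y a b : G) :
    ⁅x, y⁆ =
      ((x * y) * ⁅x⁻¹, y⁻¹ * b⁆ * (x * y)⁻¹) * ⁅x * b * x⁻¹, a * x⁻¹⁆ * ⁅a, b⁆ := by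
  rw [conj_mul_commutatorElement_inv_left, commutatorElement_conj_mul_inv_right,
    ← commutatorElement_inv x b, ← commutatorElement_inv a b]
  simp only [mul_assoc, inv_mul_cancel_left, inv_mul_cancel, mul_one]
end
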